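/- Let A be a pointed space and ι_∗ : A → ∗ the map to the point. Then G_i(ι_∗) is homotopy equivalent to the join A ⋈ ⋯ ⋈ A of i+1 copies of A, the map γ_{k,k+1} : G_k(ι_∗) → G_{k+1}(ι_∗) is null-homotopic for every k, and if the (k+1)-fold join A ⋈ ⋯ ⋈ A is not contractible then relcat^k(ι_∗) = k + 1. -/

import Mathlib

/-!
Framework: pointed/topological homotopy theory à la Doeraene–El Haouari.
Concrete models of homotopy pullbacks (path space construction) and homotopy
pushouts (double mapping cylinders), the Ganea construction of a map,
sectional category `secat`, relative category `relcat` (and of order `k`,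
`relcatk`), relative suspensions, the whisker maps `ω_n`, the Hopf category
`hcat` and the strong Hopf category `Hcat`.
-/

noncomputable section

open ContinuousMap unitInterval

universe u

section Basic

variable {W A B X Y P Z' : Type u} [TopologicalSpace W] [TopologicalSpace A] [TopologicalSpace B]
  [TopologicalSpace X] [TopologicalSpace Y] [TopologicalSpace P] [TopologicalSpace Z']

/-- `f : X → Y` is a homotopy equivalence. -/
def IsHEquiv {X Y : Type u} [TopologicalSpace X] [TopologicalSpace Y] (f : C(X, Y)) : Prop :=
  ∃ g : C(Y, X), (f.comp g).Homotopic (ContinuousMap.id Y) ∧ (g.comp f).Homotopic (ContinuousMap.id X)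

/-- `p` is a homotopy epimorphism: `u ∘ p ≃ v ∘ p` implies `u ≃ v`. -/
def IsHEpi {X Y : Type u} [TopologicalSpace X] [TopologicalSpace Y] (p : C(X, Y)) : Prop :=
  ∀ (Z : TopCat.{u}) (u v : C(Y, Z)), (u.comp p).Homotopic (v.comp p) → u.Homotopic v

/-- The concrete homotopy pullback of `f : A → X` and `g : B → X`:
points of `A` and `B` together with a path joining their images. -/
@[reducible] def HPb (f : C(A, X)) (g : C(B, X)) : Type u :=
  {p : A × C(unitInterval, X) × B // p.2.1 0 = f p.1 ∧ p.2.1 1 = g p.2.2}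

/-- First projection of the homotopy pullback. -/
def HPb.pr1 (f : C(A, X)) (g : C(B, X)) : C(HPb f g, A) :=
  ⟨fun p => p.1.1, (continuous_fst.comp continuous_subtype_val)⟩

/-- Second projection of the homotopy pullback. -/
def HPb.pr2 (f : C(A, X)) (g : C(B, X)) : C(HPb f g, B) :=
  ⟨fun p => p.1.2.2, (continuous_snd.comp (continuous_snd.comp continuous_subtype_val))⟩

/-- The canonical homotopy `f ∘ pr1 ≃ g ∘ pr2` on the homotopy pullback,
given by evaluating the path component. -/
def HPb.evalHomotopy (f : C(A, X)) (g : C(B, X)) :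
    ContinuousMap.Homotopy (f.comp (HPb.pr1 f g)) (g.comp (HPb.pr2 f g)) where
  toFun := fun q => q.2.1.2.1 q.1
  continuous_toFun := by
    have h1 : Continuous fun q : unitInterval × HPb f g => ((q.2.1.2.1 : C(unitInterval, X)), q.1) :=
      ((continuous_fst.comp (continuous_snd.comp (continuous_subtype_val.comp continuous_snd)))).prodMk
        continuous_fst
    exact continuous_eval.comp h1
  map_zero_left := fun p => p.2.1
  map_one_left := fun p => p.2.2

/-- The whisker map into the homotopy pullback induced by a homotopy commutative square. -/
def HPb.whisker (f : C(A, X)) (g : C(B, X)) (p : C(Z', A)) (q : C(Z', B))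
    (H : ContinuousMap.Homotopy (f.comp p) (g.comp q)) : C(Z', HPb f g) where
  toFun := fun z => ⟨(p z, ((H.toContinuousMap.comp ContinuousMap.prodSwap).curry z, q z)),
    ⟨H.apply_zero z, H.apply_one z⟩⟩
  continuous_toFun := by
    apply Continuous.subtype_mk
    exact (map_continuous p).prodMk
      (((map_continuous (H.toContinuousMap.comp ContinuousMap.prodSwap).curry)).prodMk
        (map_continuous q))

/-- A homotopy commutative square is a homotopy pullback if some whisker map
to the concrete homotopy pullback is a homotopy equivalence. -/
def IsHPullback (f : C(A, X)) (g : C(B, X)) (p : C(Z', A)) (q : C(Z', B)) : Prop :=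
  ∃ H : ContinuousMap.Homotopy (f.comp p) (g.comp q), IsHEquiv (HPb.whisker f g p q H)

/-- The gluing relation for the double mapping cylinder of `f : W → A` and `g : W → B`. -/
inductive DCylRel (f : C(W, A)) (g : C(W, B)) :
    (A ⊕ (B ⊕ W × unitInterval)) → (A ⊕ (B ⊕ W × unitInterval)) → Prop
  | left (w : W) : DCylRel f g (Sum.inl (f w)) (Sum.inr (Sum.inr (w, 0)))
  | right (w : W) : DCylRel f g (Sum.inr (Sum.inl (g w))) (Sum.inr (Sum.inr (w, 1)))

/-- The double mapping cylinder: the concrete homotopy pushout of `f : W → A`, `g : W → B`. -/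
@[reducible] def DCyl (f : C(W, A)) (g : C(W, B)) : Type u := Quot (DCylRel f g)

/-- Left leg of the double mapping cylinder. -/
def DCyl.inl (f : C(W, A)) (g : C(W, B)) : C(A, DCyl f g) :=
  ⟨fun a => Quot.mk _ (Sum.inl a), continuous_quot_mk.comp continuous_inl⟩

/-- Right leg of the double mapping cylinder. -/
def DCyl.inr (f : C(W, A)) (g : C(W, B)) : C(B, DCyl f g) :=
  ⟨fun b => Quot.mk _ (Sum.inr (Sum.inl b)), continuous_quot_mk.comp (continuous_inr.comp continuous_inl)⟩

/-- The map out of a double mapping cylinder glued from `u`, `v` and a homotopy `u∘f ≃ v∘g`. -/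
def DCyl.glue {f : C(W, A)} {g : C(W, B)} (u : C(A, P)) (v : C(B, P))
    (H : ContinuousMap.Homotopy (u.comp f) (v.comp g)) : C(DCyl f g, P) where
  toFun := Quot.lift (Sum.elim u (Sum.elim v (fun q => H (q.2, q.1))))
    (by rintro x y (⟨w⟩ | ⟨w⟩)
        · exact (H.apply_zero w).symm
        · exact (H.apply_one w).symm)
  continuous_toFun := by
    apply continuous_quot_lift
    exact (map_continuous u).sumElim ((map_continuous v).sumElim
      ((H.toContinuousMap.continuous).comp continuous_swap))

/-- A homotopy commutative square is a homotopy pushout if some glued map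
from the concrete double mapping cylinder is a homotopy equivalence. -/
def IsHPushout (f : C(W, A)) (g : C(W, B)) (u : C(A, P)) (v : C(B, P)) : Prop :=
  ∃ H : ContinuousMap.Homotopy (u.comp f) (v.comp g), IsHEquiv (DCyl.glue u v H)

/-- A map `g` is relatively dominated by `f` (both defined on `B`). -/
def RelDominated {B Y X : Type u} [TopologicalSpace B] [TopologicalSpace Y] [TopologicalSpace X]
    (g : C(B, Y)) (f : C(B, X)) : Prop :=
  ∃ (φ : C(X, Y)) (sec : C(Y, X)), (φ.comp sec).Homotopic (ContinuousMap.id Y) ∧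
    (φ.comp f).Homotopic g ∧ (sec.comp g).Homotopic f

end Basic

section Ganea

variable {A X : Type u} [TopologicalSpace A] [TopologicalSpace X]

/-- One stage of the Ganea construction. -/
structure GaneaAux (A X : Type u) [TopologicalSpace A] [TopologicalSpace X] where
  /-- the space `G_n` -/
  G : Type u
  /-- its topology -/
  [topG : TopologicalSpace G]
  /-- the Ganea map `g_n : G_n → X` -/
  g : C(G, X)
  /-- the canonical map `α_n : A → G_n` -/
  α : C(A, G)

attribute [instance] GaneaAux.topG

/-- The Ganea construction of `ι : A → X`: `G_0 = A`, `g_0 = ι`, and `G_{n+1}` is the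
homotopy pushout (double mapping cylinder) of the two projections of the homotopy
pullback `F_n` of `g_n` and `ι`. -/
def ganeaAux (ι : C(A, X)) : ℕ → GaneaAux A X
  | 0 => { G := A, g := ι, α := ContinuousMap.id A }
  | (n+1) =>
    { G := DCyl (HPb.pr1 (ganeaAux ι n).g ι) (HPb.pr2 (ganeaAux ι n).g ι)
      g := DCyl.glue (ganeaAux ι n).g ι (HPb.evalHomotopy (ganeaAux ι n).g ι)
      α := DCyl.inr (HPb.pr1 (ganeaAux ι n).g ι) (HPb.pr2 (ganeaAux ι n).g ι) }

/-- The `n`-th Ganea space `G_n(ι)`. -/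
def GaneaG (ι : C(A, X)) (n : ℕ) : Type u := (ganeaAux ι n).G

instance (ι : C(A, X)) (n : ℕ) : TopologicalSpace (GaneaG ι n) := (ganeaAux ι n).topG

/-- The `n`-th Ganea map `g_n : G_n(ι) → X`. -/
def ganeaMap (ι : C(A, X)) (n : ℕ) : C(GaneaG ι n, X) := (ganeaAux ι n).g

/-- The canonical map `α_n : A → G_n(ι)`. -/
def ganeaAlpha (ι : C(A, X)) (n : ℕ) : C(A, GaneaG ι n) := (ganeaAux ι n).α

/-- The `n`-th homotopy fibre `F_n(ι)`: the homotopy pullback of `g_n` and `ι`. -/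
def ganeaF (ι : C(A, X)) (n : ℕ) : Type u := HPb (ganeaMap ι n) ι

instance (ι : C(A, X)) (n : ℕ) : TopologicalSpace (ganeaF ι n) :=
  inferInstanceAs (TopologicalSpace (HPb (ganeaMap ι n) ι))

/-- `β_n : F_n(ι) → G_n(ι)`. -/
def ganeaBeta (ι : C(A, X)) (n : ℕ) : C(ganeaF ι n, GaneaG ι n) := HPb.pr1 (ganeaMap ι n) ι

/-- `η_n : F_n(ι) → A`. -/
def ganeaEta (ι : C(A, X)) (n : ℕ) : C(ganeaF ι n, A) := HPb.pr2 (ganeaMap ι n) ι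

/-- `γ_n : G_n(ι) → G_{n+1}(ι)`. -/
def ganeaGamma (ι : C(A, X)) (n : ℕ) : C(GaneaG ι n, GaneaG ι (n+1)) :=
  DCyl.inl (HPb.pr1 (ganeaAux ι n).g ι) (HPb.pr2 (ganeaAux ι n).g ι)

/-- `γ_{k,k+m} : G_k(ι) → G_{k+m}(ι)`, the composite of the `γ_i`. -/
def ganeaGammaFrom (ι : C(A, X)) (k : ℕ) : (m : ℕ) → C(GaneaG ι k, GaneaG ι (k + m))
  | 0 => ContinuousMap.id _
  | (m+1) => (ganeaGamma ι (k+m)).comp (ganeaGammaFrom ι k m)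

/-- The sectional category of `ι : A → X`: the least `n` such that `g_n : G_n(ι) → X`
admits a homotopy section. -/
def secat (ι : C(A, X)) : ℕ∞ :=
  sInf {n : ℕ∞ | ∃ m : ℕ, n = (m : ℕ∞) ∧ ∃ sec : C(X, GaneaG ι m),
    ((ganeaMap ι m).comp sec).Homotopic (ContinuousMap.id X)}

/-- The relative category of `ι : A → X`: the least `n` such that `g_n : G_n(ι) → X`
admits a homotopy section `σ` with `σ ∘ ι ≃ α_n`. -/
def relcat (ι : C(A, X)) : ℕ∞ :=
  sInf {n : ℕ∞ | ∃ m : ℕ, n = (m : ℕ∞) ∧ ∃ sec : C(X, GaneaG ι m),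
    ((ganeaMap ι m).comp sec).Homotopic (ContinuousMap.id X) ∧
    (sec.comp ι).Homotopic (ganeaAlpha ι m)}

/-- The relative category of order `k` of `ι : A → X`: the least `n (= k + m)` such that
`g_n` admits a homotopy section `σ` with `σ ∘ g_k ≃ γ_{k,n}`. -/
def relcatk (ι : C(A, X)) (k : ℕ) : ℕ∞ :=
  sInf {n : ℕ∞ | ∃ m : ℕ, n = ((k + m : ℕ) : ℕ∞) ∧ ∃ sec : C(X, GaneaG ι (k + m)),
    ((ganeaMap ι (k + m)).comp sec).Homotopic (ContinuousMap.id X) ∧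
    (sec.comp (ganeaMap ι k)).Homotopic (ganeaGammaFrom ι k m)}

/-- The Lusternik–Schnirelmann category of the pointed space `(X, x₀)`,
i.e. the relative category of `∗ → X`. -/
def ptcat (X : Type u) [TopologicalSpace X] (x₀ : X) : ℕ∞ :=
  relcat (ContinuousMap.const PUnit.{u+1} x₀)

end Ganea

section RelSuspension

variable {W A X : Type u} [TopologicalSpace W] [TopologicalSpace A] [TopologicalSpace X]

/-- A relative suspension of `η, β : W → A`: a homotopy pushout of `η` and `β`
both of whose legs are the same map `θ : A → S`.  The structure records the
structure homotopy `K : θ∘η ≃ θ∘β` together with the fact that the glued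
comparison map from the double mapping cylinder is a homotopy equivalence. -/
structure RelSusp (η β : C(W, A)) where
  /-- the total space `Σ_A W` -/
  S : Type u
  /-- its topology -/
  [topS : TopologicalSpace S]
  /-- the common leg `θ : A → Σ_A W` -/
  θ : C(A, S)
  /-- the structure homotopy `θ∘η ≃ θ∘β` -/
  K : ContinuousMap.Homotopy (θ.comp η) (θ.comp β)
  /-- a homotopy inverse to the comparison map `DCyl η β → S` -/
  inv : C(S, DCyl η β)
  glue_inv : ((DCyl.glue θ θ K).comp inv).Homotopic (ContinuousMap.id S)
  inv_glue : (inv.comp (DCyl.glue θ θ K)).Homotopic (ContinuousMap.id (DCyl η β))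

attribute [instance] RelSusp.topS

variable {η β : C(W, A)}

/-- Auxiliary: the swap-and-reverse map `W × I → I × W`. -/
def cylSwap : C(W × unitInterval, unitInterval × W) :=
  ⟨fun p => (unitInterval.symm p.2, p.1),
    (unitInterval.continuous_symm.comp continuous_snd).prodMk continuous_fst⟩

/-- Auxiliary: the family of paths `t ↦ f (K (σ t, w))` from `ι(β w)` to `ι(η w)`. -/
def omegaPath (R : RelSusp η β) (f : C(R.S, X)) : C(W, C(unitInterval, X)) :=
  ContinuousMap.curry ((f.comp R.K.toContinuousMap).comp cylSwap)

/-- Auxiliary: the canonical map `W → F_0(ι)` underlying the whisker map `ω`. -/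
def omegaF (R : RelSusp η β) (ι : C(A, X)) (f : C(R.S, X)) (hf : ∀ a, f (R.θ a) = ι a) :
    C(W, ganeaF ι 0) where
  toFun := fun w => ⟨(β w, (omegaPath R f w, η w)), by
    constructor
    · show (omegaPath R f w) 0 = ι (β w)
      show f (R.K (unitInterval.symm 0, w)) = ι (β w)
      rw [unitInterval.symm_zero, R.K.apply_one]
      exact hf (β w)
    · show (omegaPath R f w) 1 = ι (η w)
      show f (R.K (unitInterval.symm 1, w)) = ι (η w)
      rw [unitInterval.symm_one, R.K.apply_zero]
      exact hf (η w)⟩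
  continuous_toFun := by
    apply Continuous.subtype_mk
    exact (map_continuous β).prodMk ((map_continuous (omegaPath R f)).prodMk (map_continuous η))

/-- The canonical comparison `DCyl η β → G_1(ι)` (the concrete model of `ω_1`). -/
def omegaDCyl (R : RelSusp η β) (ι : C(A, X)) (f : C(R.S, X)) (hf : ∀ a, f (R.θ a) = ι a) :
    C(DCyl η β, GaneaG ι 1) where
  toFun := Quot.lift (Sum.elim
      (fun a => ganeaAlpha ι 1 a)
      (Sum.elim (fun a => ganeaGamma ι 0 (ganeaAlpha ι 0 a))
        (fun q => Quot.mk _ (Sum.inr (Sum.inr (omegaF R ι f hf q.1, unitInterval.symm q.2))))))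
    (by
      rintro x y (⟨w⟩ | ⟨w⟩)
      · show ganeaAlpha ι 1 (η w) =
          Quot.mk _ (Sum.inr (Sum.inr (omegaF R ι f hf w, unitInterval.symm 0)))
        rw [unitInterval.symm_zero]
        exact Quot.sound (DCylRel.right (omegaF R ι f hf w))
      · show ganeaGamma ι 0 (ganeaAlpha ι 0 (β w)) =
          Quot.mk _ (Sum.inr (Sum.inr (omegaF R ι f hf w, unitInterval.symm 1)))
        rw [unitInterval.symm_one]
        exact Quot.sound (DCylRel.left (omegaF R ι f hf w)))
  continuous_toFun := by
    apply continuous_quot_lift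
    apply Continuous.sumElim
    · exact map_continuous (ganeaAlpha ι 1)
    apply Continuous.sumElim
    · exact (map_continuous (ganeaGamma ι 0)).comp (map_continuous (ganeaAlpha ι 0))
    · exact (continuous_quot_mk.comp (continuous_inr.comp continuous_inr)).comp
        (((map_continuous (omegaF R ι f hf)).comp continuous_fst).prodMk
          (unitInterval.continuous_symm.comp continuous_snd))

/-- The whisker map `ω_1 : Σ_A W → G_1(ι)`. -/
def omega1 (R : RelSusp η β) (ι : C(A, X)) (f : C(R.S, X)) (hf : ∀ a, f (R.θ a) = ι a) :
    C(R.S, GaneaG ι 1) :=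
  (omegaDCyl R ι f hf).comp R.inv

/-- The whisker map `ω_{1+m} = γ_{1,1+m} ∘ ω_1 : Σ_A W → G_{1+m}(ι)`. -/
def omega (R : RelSusp η β) (ι : C(A, X)) (f : C(R.S, X)) (hf : ∀ a, f (R.θ a) = ι a) (m : ℕ) :
    C(R.S, GaneaG ι (1 + m)) :=
  (ganeaGammaFrom ι 1 m).comp (omega1 R ι f hf)

/-- The Hopf category of `f : Σ_A W → X`: the least `n ≥ 1` such that
`g_n : G_n(ι_X) → X` (for `ι_X = f ∘ θ`) admits a homotopy section `σ` with `σ ∘ f ≃ ω_n`. -/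
def hcat (R : RelSusp η β) {X : Type u} [TopologicalSpace X] (f : C(R.S, X)) : ℕ∞ :=
  sInf {n : ℕ∞ | ∃ m : ℕ, n = ((1 + m : ℕ) : ℕ∞) ∧
    ∃ sec : C(X, GaneaG (f.comp R.θ) (1 + m)),
      ((ganeaMap (f.comp R.θ) (1 + m)).comp sec).Homotopic (ContinuousMap.id X) ∧
      (sec.comp f).Homotopic (omega R (f.comp R.θ) f (fun _ => rfl) m)}

/-- A chain of homotopy commutative cubes realizing `Hcat ≤ n`, defined by downward
recursion: `HcatChain R n ιn ζn` says that there are spaces `X_0, …, X_n = X`, maps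
`ι_i : A → X_i` with `ι_0` a homotopy equivalence and `ι_n = ιn`, maps
`ζ_i : Σ_A W → X_i` with `ζ_n = ζn`, and for each `i < n` a homotopy commutative cube
whose top face is the relative suspension square and whose bottom face is a homotopy
pushout as in the definition of the strong Hopf category. -/
def HcatChain (R : RelSusp η β) : (n : ℕ) → {X : Type u} → [TopologicalSpace X] →
    C(A, X) → C(R.S, X) → Prop
  | 0 => fun ιn _ =>
      ∃ lam : C(_, A), (ιn.comp lam).Homotopic (ContinuousMap.id _) ∧
        (lam.comp ιn).Homotopic (ContinuousMap.id A)
  | (n+1) => fun ιn ζn =>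
      ∃ (X' : TopCat.{u}) (ι' : C(A, X')) (ζ' : C(R.S, X'))
        (Z : TopCat.{u}) (a : C(Z, A)) (z : C(Z, X')) (w : C(W, Z)) (χ : C(X', _)),
        IsHPushout a z ιn χ ∧
        (a.comp w).Homotopic η ∧
        (z.comp w).Homotopic (ι'.comp β) ∧
        (ζn.comp R.θ).Homotopic ιn ∧
        (ζn.comp R.θ).Homotopic (χ.comp ι') ∧
        HcatChain R n ι' ζ'

/-- `Hcat f ≤ n`. -/
def HcatLe (R : RelSusp η β) {X : Type u} [TopologicalSpace X] (f : C(R.S, X)) (n : ℕ) : Prop :=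
  1 ≤ n ∧ ∃ ιn : C(A, X), HcatChain R n ιn f

/-- The strong Hopf category of `f : Σ_A W → X`. -/
def Hcat (R : RelSusp η β) {X : Type u} [TopologicalSpace X] (f : C(R.S, X)) : ℕ∞ :=
  sInf {n : ℕ∞ | ∃ m : ℕ, n = (m : ℕ∞) ∧ HcatLe R f m}

end RelSuspension

section Spaces

variable {A Z : Type u} [TopologicalSpace A] [TopologicalSpace Z]

/-- The join `A ⋈ B`: the homotopy pushout (double mapping cylinder) of the two
projections `A ← A × B → B`. -/
@[reducible] def Join (A B : Type u) [TopologicalSpace A] [TopologicalSpace B] : Type u :=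
  DCyl (⟨Prod.fst, continuous_fst⟩ : C(A × B, A)) (⟨Prod.snd, continuous_snd⟩ : C(A × B, B))

/-- The iterated join of `n+1` copies of `A` (as a bundled space). -/
def IterJoinT (A : Type u) [TopologicalSpace A] : ℕ → TopCat.{u}
  | 0 => TopCat.of A
  | (n+1) => TopCat.of (Join ↥(IterJoinT A n) A)

/-- The iterated join of `n+1` copies of `A`. -/
@[reducible] def IterJoin (A : Type u) [TopologicalSpace A] (n : ℕ) : Type u := ↥(IterJoinT A n)

/-- Gluing relation for the wedge `A ∨ A`. -/
inductive WedgeRel (A : Type u) (a₀ : A) : (A ⊕ A) → (A ⊕ A) → Prop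
  | basept : WedgeRel A a₀ (Sum.inl a₀) (Sum.inr a₀)

/-- The wedge `A ∨ A` of two copies of the pointed space `(A, a₀)`. -/
@[reducible] def Wedge (A : Type u) [TopologicalSpace A] (a₀ : A) : Type u := Quot (WedgeRel A a₀)

/-- `pr_1 : A ∨ A → A`, collapsing the second wedge summand. -/
def Wedge.pr1 (a₀ : A) : C(Wedge A a₀, A) :=
  ⟨Quot.lift (Sum.elim id (fun _ => a₀)) (by rintro x y ⟨⟩; rfl),
    continuous_quot_lift _ (continuous_id.sumElim continuous_const)⟩

/-- `pr_2 : A ∨ A → A`, collapsing the first wedge summand. -/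
def Wedge.pr2 (a₀ : A) : C(Wedge A a₀, A) :=
  ⟨Quot.lift (Sum.elim (fun _ => a₀) id) (by rintro x y ⟨⟩; rfl),
    continuous_quot_lift _ (continuous_const.sumElim continuous_id)⟩

/-- The inclusion `t₁ : A ∨ A → A × A` of the wedge in the product. -/
def Wedge.incl (a₀ : A) : C(Wedge A a₀, A × A) :=
  ⟨Quot.lift (Sum.elim (fun x => (x, a₀)) (fun x => (a₀, x))) (by rintro x y ⟨⟩; rfl),
    continuous_quot_lift _ ((continuous_id.prodMk continuous_const).sumElim
      (continuous_const.prodMk continuous_id))⟩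

/-- The (unreduced) suspension `ΣZ`, as the double mapping cylinder of `∗ ← Z → ∗`. -/
@[reducible] def Susp (Z : Type u) [TopologicalSpace Z] : Type u :=
  DCyl (ContinuousMap.const Z (PUnit.unit : PUnit.{u+1})) (ContinuousMap.const Z PUnit.unit)

/-- The north pole of the suspension, used as its basepoint. -/
def Susp.north (Z : Type u) [TopologicalSpace Z] : Susp Z := Quot.mk _ (Sum.inl PUnit.unit)

/-- The map `ι_∗ : A → ∗`. -/
def iotaStar (A : Type u) [TopologicalSpace A] : C(A, PUnit.{u+1}) :=
  ContinuousMap.const A PUnit.unit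

/-- The `n`-sphere `S^n ⊆ ℝ^{n+1}`. -/
@[reducible] def Sph (n : ℕ) : Type :=
  ↥(Metric.sphere (0 : EuclideanSpace ℝ (Fin (n+1))) 1)

end Spaces

section OldCW

open CategoryTheory

namespace RelativeCWComplex

/-- The `n`-dimensional sphere (Mathlib, December 2024). -/
def sphere (n : ℤ) : TopCat.{u} :=
  TopCat.of <| ULift <| Metric.sphere (0 : EuclideanSpace ℝ <| Fin <| (n + 1).toNat) 1

/-- The `n`-dimensional closed disk (Mathlib, December 2024). -/
def disk (n : ℤ) : TopCat.{u} :=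
  TopCat.of <| ULift <| Metric.closedBall (0 : EuclideanSpace ℝ <| Fin <| n.toNat) 1

/-- The inclusion map from the `n`-sphere to the `(n + 1)`-disk. -/
def sphereInclusion (n : ℤ) : sphere.{u} n ⟶ disk.{u} (n + 1) :=
  TopCat.ofHom ⟨fun x => ULift.up ⟨x.down.1, Metric.sphere_subset_closedBall x.down.2⟩,
    continuous_uliftUp.comp
      (Continuous.subtype_mk (continuous_subtype_val.comp continuous_uliftDown) _)⟩

/-- `X'` is obtained from `X` by attaching generalized cells `f : S ⟶ D`. -/
structure AttachGeneralizedCells {S D : TopCat.{u}} (f : S ⟶ D) (X X' : TopCat.{u}) where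
  /-- The index type over the generalized cells -/
  cells : Type u
  /-- An attaching map for each generalized cell -/
  attachMaps : cells → (S ⟶ X)
  /-- `X'` is the pushout of `∐ S ⟶ X` and `∐ S ⟶ ∐ D`. -/
  iso_pushout : X' ≅ Limits.pushout (Limits.Sigma.desc attachMaps)
    (Limits.Sigma.map fun (_ : cells) => f)

/-- `X'` is obtained from `X` by attaching `(n + 1)`-disks. -/
def AttachCells (n : ℤ) := AttachGeneralizedCells.{u} (sphereInclusion.{u} n)

end RelativeCWComplex

/-- A relative CW-complex (Mathlib, December 2024). -/
structure RelativeCWComplex where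
  /-- The skeletons. -/
  sk : ℕ → TopCat.{u}
  /-- Each `sk (n + 1)` is obtained from `sk n` by attaching `n`-disks. -/
  attachCells (n : ℕ) : RelativeCWComplex.AttachCells.{u} ((n : ℤ) - 1) (sk n) (sk (n + 1))

/-- A CW-complex is a relative CW-complex whose `sk 0` is empty (Mathlib, December 2024). -/
structure CWComplex extends RelativeCWComplex.{u} where
  /-- `sk 0` is empty. -/
  isEmpty_sk_zero : IsEmpty (sk 0)

namespace RelativeCWComplex

/-- The inclusion map from `X` to `X'` obtained by attaching generalized cells. -/
def AttachGeneralizedCells.inclusion {S D : TopCat.{u}} {f : S ⟶ D} {X X' : TopCat.{u}}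
    (att : AttachGeneralizedCells f X X') : X ⟶ X' :=
  Limits.pushout.inl _ _ ≫ att.iso_pushout.inv

/-- The inclusion map from `sk n` to `sk (n + 1)`. -/
def skInclusion (X : RelativeCWComplex.{u}) (n : ℕ) : X.sk n ⟶ X.sk (n + 1) :=
  AttachGeneralizedCells.inclusion (X.attachCells n)

/-- The topology on a relative CW-complex: the colimit of its skeleta. -/
def toTopCat (X : RelativeCWComplex.{u}) : TopCat.{u} :=
  Limits.colimit <| Functor.ofSequence <| skInclusion X

end RelativeCWComplex

end OldCW

section Connectivity

/-- The boundary inclusion `S^{k-1} → D^k`. -/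
def diskIncl (k : ℕ) : C(↥(Metric.sphere (0 : EuclideanSpace ℝ (Fin k)) 1),
    ↥(Metric.closedBall (0 : EuclideanSpace ℝ (Fin k)) 1)) :=
  ⟨fun x => ⟨x.1, Metric.sphere_subset_closedBall x.2⟩,
    Continuous.subtype_mk continuous_subtype_val _⟩

/-- `ι : A → X` is a `c`-connected map: for all `k ≤ c`, every strictly commutative
square on the pair `(D^k, S^{k-1})` admits a lift which is exact on the boundary and
commutes up to homotopy rel the boundary sphere. -/
def IsConnMap (c : ℕ) {A X : Type u} [TopologicalSpace A] [TopologicalSpace X]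
    (ι : C(A, X)) : Prop :=
  ∀ k : ℕ, k ≤ c →
    ∀ (v : C(↥(Metric.closedBall (0 : EuclideanSpace ℝ (Fin k)) 1), X))
      (u : C(↥(Metric.sphere (0 : EuclideanSpace ℝ (Fin k)) 1), A)),
      v.comp (diskIncl k) = ι.comp u →
      ∃ w : C(↥(Metric.closedBall (0 : EuclideanSpace ℝ (Fin k)) 1), A),
        w.comp (diskIncl k) = u ∧
        (ι.comp w).HomotopicRel v (Set.range (diskIncl k))

/-- The space `S` carries a CW-structure all of whose cells have dimension `< d`. -/
def IsCWOfDimLt (S : Type u) [TopologicalSpace S] (d : ℕ) : Prop :=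
  ∃ (K : CWComplex.{u}) (_ : S ≃ₜ ↥(RelativeCWComplex.toTopCat K.toRelativeCWComplex)),
    ∀ j : ℕ, d ≤ j → IsEmpty ((K.attachCells j).cells)

/-- The space `S` carries some CW-structure. -/
def IsCW (S : Type u) [TopologicalSpace S] : Prop :=
  ∃ (K : CWComplex.{u}), Nonempty (S ≃ₜ ↥(RelativeCWComplex.toTopCat K.toRelativeCWComplex))

end Connectivity

/-!
Over a point all paths are constant, so the homotopy pullback `F_n` of `g_n` and `ι` is the
product `G_n × A` with `β_n`, `η_n` the projections, and the double mapping cylinder `G_{n+1}`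
is literally the join `G_n ⋈ A`. The projection `β_n` has the section `x ↦ (x, a₀)`, along which
`η_n` is constant, so the cylinder coordinate contracts `γ_n` onto the point `α_{n+1}(a₀)`. This
null-homotopy makes the constant section witness `relcat^k ≤ k + 1`, while `relcat^k = k` would
make `g_k : G_k → ∗` a homotopy equivalence, i.e. `G_k ≅ A ⋈ ⋯ ⋈ A` contractible.
-/

theorem ContinuousMap.HomotopyEquiv.isHEquiv {X Y : Type u} [TopologicalSpace X]
    [TopologicalSpace Y] (e : X ≃ₕ Y) : IsHEquiv e.toFun :=
  ⟨e.invFun, e.right_inv, e.left_inv⟩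

theorem IsHEquiv.contractibleSpace {G Y : Type u} [TopologicalSpace G] [TopologicalSpace Y]
    [ContractibleSpace Y] {f : C(G, Y)} (hf : IsHEquiv f) : ContractibleSpace G :=
  let ⟨g, hfg, hgf⟩ := hf
  ContinuousMap.HomotopyEquiv.contractibleSpace ⟨f, g, hgf, hfg⟩

section HomotopyPullback

variable {A B X : Type u} [TopologicalSpace A] [TopologicalSpace B] [TopologicalSpace X]
  [Subsingleton X]

def HPb.homeoProdOfSubsingleton (f : C(A, X)) (g : C(B, X)) : HPb f g ≃ₜ A × B where
  toFun p := (p.1.1, p.1.2.2)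
  invFun q := ⟨(q.1, .const _ (f q.1), q.2), rfl, Subsingleton.elim _ _⟩
  left_inv _ := Subtype.ext (Prod.ext rfl (Prod.ext (Subsingleton.elim _ _) rfl))
  right_inv _ := rfl
  continuous_toFun := (HPb.pr1 f g).continuous.prodMk (HPb.pr2 f g).continuous
  continuous_invFun := by fun_prop

end HomotopyPullback

namespace DCyl

variable {W A B W' A' B' : Type u} [TopologicalSpace W] [TopologicalSpace A] [TopologicalSpace B]
  [TopologicalSpace W'] [TopologicalSpace A'] [TopologicalSpace B']
  {f : C(W, A)} {g : C(W, B)} {f' : C(W', A')} {g' : C(W', B')}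

def map (hW : C(W, W')) (hA : C(A, A')) (hB : C(B, B'))
    (hf : ∀ w, f' (hW w) = hA (f w)) (hg : ∀ w, g' (hW w) = hB (g w)) :
    C(DCyl f g, DCyl f' g') where
  toFun := Quot.map (Sum.map hA (Sum.map hB (Prod.map hW id))) (by
    rintro _ _ (⟨w⟩ | ⟨w⟩)
    · exact show DCylRel f' g' (.inl (hA (f w))) _ from hf w ▸ DCylRel.left (hW w)
    · exact show DCylRel f' g' (.inr (.inl (hB (g w)))) _ from hg w ▸ DCylRel.right (hW w))
  continuous_toFun := continuous_quot_lift _ (continuous_quot_mk.comp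
    (hA.continuous.sumMap (hB.continuous.sumMap (hW.continuous.prodMap continuous_id))))

@[simp]
theorem map_mk (hW : C(W, W')) (hA : C(A, A')) (hB : C(B, B'))
    (hf : ∀ w, f' (hW w) = hA (f w)) (hg : ∀ w, g' (hW w) = hB (g w))
    (x : A ⊕ (B ⊕ W × unitInterval)) :
    map hW hA hB hf hg (Quot.mk _ x) = Quot.mk _ (Sum.map hA (Sum.map hB (Prod.map hW id)) x) :=
  rfl

def congr (eW : W ≃ₜ W') (eA : A ≃ₜ A') (eB : B ≃ₜ B')
    (hf : ∀ w, f' (eW w) = eA (f w)) (hg : ∀ w, g' (eW w) = eB (g w)) :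
    DCyl f g ≃ₜ DCyl f' g' where
  toFun := map eW eA eB hf hg
  invFun := map (f := f') (g := g') eW.symm eA.symm eB.symm
    (fun w => (eA.symm_apply_eq.2 (by rw [← hf]; simp)).symm)
    (fun w => (eB.symm_apply_eq.2 (by rw [← hg]; simp)).symm)
  left_inv := Quot.ind <| by rintro (a | b | ⟨w, t⟩) <;> simp
  right_inv := Quot.ind <| by rintro (a | b | ⟨w, t⟩) <;> simp
  continuous_toFun := (map _ _ _ hf hg).continuous
  continuous_invFun := ContinuousMap.continuous _

def cylinderHomotopy (f : C(W, A)) (g : C(W, B)) :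
    ContinuousMap.Homotopy ((inl f g).comp f) ((inr f g).comp g) where
  toFun q := Quot.mk _ (Sum.inr (Sum.inr (q.2, q.1)))
  continuous_toFun := continuous_quot_mk.comp (continuous_inr.comp (continuous_inr.comp
    continuous_swap))
  map_zero_left w := (Quot.sound (DCylRel.left w)).symm
  map_one_left w := (Quot.sound (DCylRel.right w)).symm

theorem inl_homotopic_of_rightInverse (s : C(A, W)) (hs : f.comp s = ContinuousMap.id A) :
    (inl f g).Homotopic ((inr f g).comp (g.comp s)) := by
  have : (((inl f g).comp f).comp s).Homotopic (((inr f g).comp g).comp s) :=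
    ⟨(cylinderHomotopy f g).compContinuousMap s⟩
  rwa [ContinuousMap.comp_assoc, hs, ContinuousMap.comp_id] at this

end DCyl

section RelcatK

variable {A X : Type u} [TopologicalSpace A] [TopologicalSpace X]

theorem succ_le_relcatk_of_not_isHEquiv {ι : C(A, X)} {k : ℕ}
    (h : ¬ IsHEquiv (ganeaMap ι k)) : ((k + 1 : ℕ) : ℕ∞) ≤ relcatk ι k := by
  refine le_sInf ?_
  rintro n ⟨_ | m, rfl, sec, hsec, hsec'⟩
  · exact absurd ⟨sec, hsec, hsec'⟩ h
  · exact_mod_cast (by omega : k + 1 ≤ k + (m + 1))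

theorem relcatk_le_succ_of_ganeaGamma_homotopic_const [Subsingleton X] {ι : C(A, X)} {k : ℕ}
    {p : GaneaG ι (k + 1)} (h : (ganeaGamma ι k).Homotopic (.const _ p)) :
    relcatk ι k ≤ ((k + 1 : ℕ) : ℕ∞) :=
  sInf_le ⟨1, rfl, .const X p,
    Subsingleton.elim (ContinuousMap.id X) _ ▸ ContinuousMap.Homotopic.refl _, h.symm⟩

end RelcatK

section GaneaOverPoint

variable {A X : Type u} [TopologicalSpace A] [TopologicalSpace X] [Subsingleton X]

def ganeaHomeoIterJoin (ι : C(A, X)) : ∀ n, GaneaG ι n ≃ₜ IterJoin A n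
  | 0 => Homeomorph.refl A
  | n + 1 => DCyl.congr
      ((HPb.homeoProdOfSubsingleton _ ι).trans
        ((ganeaHomeoIterJoin ι n).prodCongr (Homeomorph.refl A)))
      (ganeaHomeoIterJoin ι n) (Homeomorph.refl A) (fun _ => rfl) (fun _ => rfl)

theorem ganeaGamma_homotopic_const (ι : C(A, X)) (a₀ : A) (n : ℕ) :
    (ganeaGamma ι n).Homotopic (.const _ (ganeaAlpha ι (n + 1) a₀)) :=
  DCyl.inl_homotopic_of_rightInverse
    ⟨(HPb.homeoProdOfSubsingleton (ganeaMap ι n) ι).symm ∘ (·, a₀), by fun_prop⟩ rfl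

end GaneaOverPoint

/-- Let `A` be a pointed space and `ι_∗ : A → ∗` the map to the point. Then
`G_i(ι_∗)` is homotopy equivalent to the join `A ⋈ ⋯ ⋈ A` of `i+1` copies of `A`, the map
`γ_{k,k+1} : G_k(ι_∗) → G_{k+1}(ι_∗)` is null-homotopic for every `k`, and if the
`(k+1)`-fold join `A ⋈ ⋯ ⋈ A` is not contractible then `relcat^k(ι_∗) = k + 1`. -/
theorem ganea_of_map_to_point {A : Type u} [TopologicalSpace A] (a₀ : A) :
    (∀ i : ℕ, ∃ e : C(GaneaG (iotaStar A) i, IterJoin A i), IsHEquiv e) ∧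
    (∀ k : ℕ, ∃ p : GaneaG (iotaStar A) (k + 1),
        (ganeaGamma (iotaStar A) k).Homotopic (ContinuousMap.const (GaneaG (iotaStar A) k) p)) ∧
    (∀ k : ℕ, ¬ ContractibleSpace (IterJoin A k) →
        relcatk (iotaStar A) k = ((k + 1 : ℕ) : ℕ∞)) := by
  have hJoin := ganeaHomeoIterJoin (iotaStar A)
  refine ⟨fun i => ⟨_, (hJoin i).toHomotopyEquiv.isHEquiv⟩,
    fun k => ⟨_, ganeaGamma_homotopic_const _ a₀ k⟩, fun k hk => ?_⟩
  refine le_antisymm (relcatk_le_succ_of_ganeaGamma_homotopic_const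
    (ganeaGamma_homotopic_const _ a₀ k)) (succ_le_relcatk_of_not_isHEquiv fun h => hk ?_)
  have := h.contractibleSpace
  exact (hJoin k).symm.contractibleSpace
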